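/- Define F(t,s) = (cos(s)·e^{it}, (sin(s)/√2)·e^{2it}) as a map from R^2 to C^2. Then the map F is isotropic: ω(F_t, F_s) = 0 for all (t,s), where ω is the standard symplectic form on C^2. -/

import Mathlib

open Real Complex

/-- The Möbius-band surface `F(t,s) = (cos s · e^{it}, (sin s / √2) · e^{2it})` in `ℂ²`. -/
noncomputable def Fmob (t s : ℝ) : ℂ × ℂ :=
  ((Real.cos s : ℂ) * Complex.exp (t * Complex.I),
   ((Real.sin s / Real.sqrt 2 : ℝ) : ℂ) * Complex.exp (2 * t * Complex.I))

/-- The Hermitian inner product on `ℂ² ≅ ℝ⁴`; its real part is the Euclidean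
inner product, its imaginary part is the standard symplectic form. -/
noncomputable def hermC2 (u v : ℂ × ℂ) : ℂ :=
  starRingEnd ℂ u.1 * v.1 + starRingEnd ℂ u.2 * v.2

/-- Partial derivative of `Fmob` in `t`. -/
noncomputable def FmobT (t s : ℝ) : ℂ × ℂ := deriv (fun t' => Fmob t' s) t

/-- Partial derivative of `Fmob` in `s`. -/
noncomputable def FmobS (t s : ℝ) : ℂ × ℂ := deriv (fun s' => Fmob t s') s

lemma expderiv (t : ℝ) (c : ℂ) : HasDerivAt (fun t' : ℝ => Complex.exp (c * t' * Complex.I)) (c * Complex.I * Complex.exp (c * t * Complex.I)) t := by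
  have h1 : HasDerivAt (fun t' : ℝ => (t' : ℂ)) 1 t := Complex.ofRealCLM.hasDerivAt
  have h2 := ((h1.const_mul c).mul_const Complex.I).cexp
  simpa [mul_comm] using h2

lemma FmobT_eq (t s : ℝ) : FmobT t s =
    ((Real.cos s : ℂ) * (Complex.I * Complex.exp (t * Complex.I)),
     ((Real.sin s / Real.sqrt 2 : ℝ) : ℂ) * (2 * Complex.I * Complex.exp (2 * t * Complex.I))) := by
  have h1 := (expderiv t 1).const_mul ((Real.cos s : ℂ))
  have h2 := (expderiv t 2).const_mul (((Real.sin s / Real.sqrt 2 : ℝ) : ℂ))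
  simp only [one_mul] at h1
  have := (h1.prodMk h2).deriv
  unfold FmobT Fmob
  rw [← this]

lemma FmobS_eq (t s : ℝ) : FmobS t s =
    ((- Real.sin s : ℂ) * Complex.exp (t * Complex.I),
     ((Real.cos s / Real.sqrt 2 : ℝ) : ℂ) * Complex.exp (2 * t * Complex.I)) := by
  have h1 := ((Real.hasDerivAt_cos s).ofReal_comp).mul_const (Complex.exp (t * Complex.I))
  have h2 := (((Real.hasDerivAt_sin s).div_const (Real.sqrt 2)).ofReal_comp).mul_const (Complex.exp (2 * t * Complex.I))
  have h := (h1.prodMk h2).deriv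
  simp only [Complex.ofReal_neg] at h
  unfold FmobS Fmob
  rw [← h]

/-- The map `F(t,s) = (cos s · e^{it}, (sin s/√2) · e^{2it})` is isotropic:
`ω(F_t, F_s) = 0` for the standard symplectic form `ω(u,v) = Im(ū₁v₁ + ū₂v₂)` on `ℂ²`. -/
theorem Fmob_isotropic (t s : ℝ) :
    (hermC2 (FmobT t s) (FmobS t s)).im = 0 := by
  rw [FmobT_eq, FmobS_eq]
  have h0 : hermC2
      ((Real.cos s : ℂ) * (Complex.I * Complex.exp (t * Complex.I)),
       ((Real.sin s / Real.sqrt 2 : ℝ) : ℂ) * (2 * Complex.I * Complex.exp (2 * t * Complex.I)))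
      ((- Real.sin s : ℂ) * Complex.exp (t * Complex.I),
       ((Real.cos s / Real.sqrt 2 : ℝ) : ℂ) * Complex.exp (2 * t * Complex.I)) = 0 := by
    unfold hermC2
    simp only [map_mul, ← Complex.exp_conj, Complex.conj_I, Complex.conj_ofReal, map_ofNat,
      map_neg]
    have e1 : Complex.exp (-(↑t * Complex.I)) * Complex.exp (↑t * Complex.I) = 1 := by
      rw [← Complex.exp_add]; ring_nf; exact Complex.exp_zero
    have e2 : Complex.exp (-(2 * ↑t * Complex.I)) * Complex.exp (2 * ↑t * Complex.I) = 1 := by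
      rw [← Complex.exp_add]; ring_nf; exact Complex.exp_zero
    have hsq : ((Real.sqrt 2 : ℝ) : ℂ) * ((Real.sqrt 2 : ℝ) : ℂ) = 2 := by
      norm_cast; exact Real.mul_self_sqrt (by norm_num)
    have hs : ((Real.sqrt 2 : ℝ) : ℂ) ≠ 0 := by
      intro h; rw [h] at hsq; norm_num at hsq
    simp only [Complex.ofReal_div]
    field_simp
    simp only [Complex.ofReal_cos, Complex.ofReal_sin]
    rw [show Complex.I * (t:ℂ) * 2 = 2 * t * Complex.I by ring, show Complex.I * (t:ℂ) = t * Complex.I from mul_comm _ _]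
    linear_combination (Complex.cos ↑s * Complex.sin ↑s * Complex.I * ((Real.sqrt 2 : ℂ) * (Real.sqrt 2 : ℂ))) * e1 - (2 * Complex.sin ↑s * Complex.cos ↑s * Complex.I) * e2 + (Complex.cos ↑s * Complex.sin ↑s * Complex.I) * hsq
  rw [h0]
  simp
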